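/- Fix Ω₁ > 0 and α > 0, and suppose ε > 0 satisfies 4ε^α < √π Ω₁. Set R_ε = √(1 − 4ε^α/(√π Ω₁)). Then the function ρ^TF_ε(x) = (Ω₁²/(8ε^{2α})) · max(0, |x|² − R_ε²) is nonnegative with ∫_{B₁} ρ^TF_ε = 1, it is the unique minimizer of the functional 𝓔^TF_ε[ρ] = ε^{2α} ∫_{B₁}(ρ(x)² − Ω₁²|x|²ρ(x)/(4ε^{2α}))dx over ρ ∈ L²(B₁) with ρ ≥ 0 a.e. and ∫_{B₁}ρ = 1, and the minimum value is E^TF_ε = −(Ω₁²/4)(1 − 8ε^α/(3√π Ω₁)). -/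

import Mathlib

open MeasureTheory Real Filter

noncomputable section

/-- Points of the plane. -/
abbrev Pt : Type := EuclideanSpace ℝ (Fin 2)

/-- The open unit disc. -/
def B1 : Set Pt := Metric.ball 0 1

/-- First partial derivative of a complex-valued function. -/
def pd1 (Ψ : Pt → ℂ) (x : Pt) : ℂ := fderiv ℝ Ψ x (EuclideanSpace.single 0 1)

/-- Second partial derivative of a complex-valued function. -/
def pd2 (Ψ : Pt → ℂ) (x : Pt) : ℂ := fderiv ℝ Ψ x (EuclideanSpace.single 1 1)

/-- Angular momentum operator `L = -i (x₁ ∂₂ - x₂ ∂₁)`. -/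
def angMom (Ψ : Pt → ℂ) (x : Pt) : ℂ :=
  -Complex.I * ((x 0 : ℂ) * pd2 Ψ x - (x 1 : ℂ) * pd1 Ψ x)

/-- The Gross-Pitaevskii energy density `|∇Ψ|² - Ω conj(Ψ) LΨ + |Ψ|⁴/ε²`. -/
def gpDensity (ε Ω : ℝ) (Ψ : Pt → ℂ) (x : Pt) : ℝ :=
  ‖pd1 Ψ x‖ ^ 2 + ‖pd2 Ψ x‖ ^ 2
    - Ω * (starRingEnd ℂ (Ψ x) * angMom Ψ x).re
    + ‖Ψ x‖ ^ 4 / ε ^ 2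

/-- The Gross-Pitaevskii functional on the unit disc. -/
def gpEnergy (ε Ω : ℝ) (Ψ : Pt → ℂ) : ℝ := ∫ x in B1, gpDensity ε Ω Ψ x

/-- Admissible (H¹, normalized) wave functions. -/
def gpAdm (Ψ : Pt → ℂ) : Prop :=
  DifferentiableOn ℝ Ψ B1 ∧
  IntegrableOn (fun x => ‖Ψ x‖ ^ 2) B1 ∧
  IntegrableOn (fun x => ‖pd1 Ψ x‖ ^ 2 + ‖pd2 Ψ x‖ ^ 2) B1 ∧
  IntegrableOn (fun x => ‖Ψ x‖ ^ 4) B1 ∧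
  IntegrableOn (fun x => (starRingEnd ℂ (Ψ x) * angMom Ψ x).re) B1 ∧
  (∫ x in B1, ‖Ψ x‖ ^ 2) = 1

/-- The GP ground-state energy: infimum of the functional over normalized functions. -/
def gpGround (ε Ω : ℝ) : ℝ := sInf {E | ∃ Ψ : Pt → ℂ, gpAdm Ψ ∧ E = gpEnergy ε Ω Ψ}

/-- A GP minimizer: a normalized admissible function attaining the infimum. -/
def IsGPMinimizer (ε Ω : ℝ) (Ψ : Pt → ℂ) : Prop :=
  gpAdm Ψ ∧ gpEnergy ε Ω Ψ = gpGround ε Ω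

/-- The Thomas-Fermi functional. -/
def tfEnergy (Ω₀ : ℝ) (ρ : Pt → ℝ) : ℝ :=
  ∫ x in B1, ((ρ x) ^ 2 - Ω₀ ^ 2 * ‖x‖ ^ 2 * ρ x / 4)

/-- Admissible TF densities: nonnegative, in L²(B₁), of total mass one. -/
def tfAdm (ρ : Pt → ℝ) : Prop :=
  IntegrableOn ρ B1 ∧ IntegrableOn (fun x => (ρ x) ^ 2) B1 ∧
  (∀ᵐ x ∂(volume.restrict B1), 0 ≤ ρ x) ∧ (∫ x in B1, ρ x) = 1

/-- The TF ground-state energy. -/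
def tfGround (Ω₀ : ℝ) : ℝ := sInf {E | ∃ ρ : Pt → ℝ, tfAdm ρ ∧ E = tfEnergy Ω₀ ρ}

/-- Radius of the TF "hole". -/
def R0 (Ω₀ : ℝ) : ℝ := Real.sqrt (1 - 4 / (Real.sqrt π * Ω₀))

/-- The TF minimizer. -/
def rhoTF (Ω₀ : ℝ) (x : Pt) : ℝ :=
  if Ω₀ ≤ 4 / Real.sqrt π then 1 / π - Ω₀ ^ 2 / 16 * (1 - 2 * ‖x‖ ^ 2)
  else max 0 (Ω₀ ^ 2 / 8 * (‖x‖ ^ 2 - 1) + Ω₀ / (2 * Real.sqrt π))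

/-- Inner radius of the support of the TF minimizer in the rapid-rotation regime. -/
def Reps (Ω₁ α ε : ℝ) : ℝ := Real.sqrt (1 - 4 * ε ^ α / (Real.sqrt π * Ω₁))

/-- The TF minimizer in the rapid-rotation regime. -/
def rhoTFeps (Ω₁ α ε : ℝ) (x : Pt) : ℝ :=
  Ω₁ ^ 2 / (8 * ε ^ (2 * α)) * max 0 (‖x‖ ^ 2 - (Reps Ω₁ α ε) ^ 2)

/-- The TF functional of the rapid-rotation regime. -/
def tfEpsEnergy (Ω₁ α ε : ℝ) (ρ : Pt → ℝ) : ℝ :=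
  ε ^ (2 * α) * ∫ x in B1, ((ρ x) ^ 2 - Ω₁ ^ 2 * ‖x‖ ^ 2 * ρ x / (4 * ε ^ (2 * α)))

open scoped ENNReal

/-!
Completing the square, `ρ² - 2Vρ = (ρ - V)² - V²`, so for each `x` the integrand of
`∫ (ρ² - 2Vρ)`, as a function of the value `ρ x ≥ 0`, is minimised exactly at `max 0 (V x)`:
hence `V₊` minimises this functional among nonnegative densities, uniquely up to null sets.
Under the constraint `∫ ρ = 1` the potential may be shifted by a constant `t` at the cost `-2t`,
so `(V - t)₊` minimises over normalised densities as soon as it has mass one.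
The rapid-rotation TF functional is `ε^{2α}` times this functional with
`V = Ω₁²|x|²/(8ε^{2α})`, and `R_ε` is exactly the shift `t = Ω₁² R_ε²/(8ε^{2α})` giving mass one.
In polar coordinates and `u = |x|²`, the disc integrals reduce to
`∫₀¹ max(0, u - R²)ⁿ du = (1 - R²)ⁿ⁺¹/(n+1)`.
-/

theorem neg_sq_max_zero_le_sq_sub_two_mul (l : ℝ) {r : ℝ} (hr : 0 ≤ r) :
    -max 0 l ^ 2 ≤ r ^ 2 - 2 * l * r := by
  rcases le_total l 0 with h | h
  · rw [max_eq_left h]; nlinarith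
  · rw [max_eq_right h]; nlinarith [sq_nonneg (r - l)]

theorem eq_max_zero_of_sq_sub_two_mul_eq {l r : ℝ} (hr : 0 ≤ r)
    (h : r ^ 2 - 2 * l * r = -max 0 l ^ 2) : r = max 0 l := by
  rcases le_total l 0 with hl | hl
  · rw [max_eq_left hl] at h ⊢; nlinarith
  · rw [max_eq_right hl] at h ⊢; nlinarith [sq_nonneg (r - l)]

theorem max_zero_sq_sub_two_mul_self (l : ℝ) :
    max 0 l ^ 2 - 2 * l * max 0 l = -max 0 l ^ 2 := by
  rcases le_total l 0 with h | h
  · simp [max_eq_left h]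
  · rw [max_eq_right h]; ring

section TFFunctional

variable {X : Type*} [MeasurableSpace X] {μ : Measure X} {V ρ : X → ℝ}

def tfFunctional (μ : Measure X) (V ρ : X → ℝ) : ℝ :=
  ∫ x, (ρ x ^ 2 - 2 * V x * ρ x) ∂μ

theorem integrable_sq_sub_two_mul (hV : MemLp V ∞ μ) (hρ : Integrable ρ μ)
    (hρ2 : Integrable (fun x => ρ x ^ 2) μ) :
    Integrable (fun x => ρ x ^ 2 - 2 * V x * ρ x) μ := by
  refine (hρ2.sub ((hρ.mul_of_top_left hV).const_mul 2)).congr (ae_of_all _ fun x => ?_)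
  simp only [Pi.sub_apply, Pi.mul_apply]
  ring

theorem tfFunctional_sub_const (hV : MemLp V ∞ μ) (hρ : Integrable ρ μ)
    (hρ2 : Integrable (fun x => ρ x ^ 2) μ) (hρ1 : ∫ x, ρ x ∂μ = 1) (t : ℝ) :
    tfFunctional μ V ρ = tfFunctional μ (fun x => V x - t) ρ - 2 * t := by
  have hVt : MemLp (fun x => V x - t) ∞ μ := hV.sub (memLp_top_const t)
  calc tfFunctional μ V ρ
      = ∫ x, ((ρ x ^ 2 - 2 * (V x - t) * ρ x) - 2 * t * ρ x) ∂μ := by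
        unfold tfFunctional; congr 1; ext x; ring
    _ = _ := by
        rw [integral_sub (integrable_sq_sub_two_mul hVt hρ hρ2) (hρ.const_mul _),
          integral_const_mul, hρ1, mul_one, tfFunctional]

theorem memLp_top_max_zero (hV : MemLp V ∞ μ) : MemLp (fun x => max 0 (V x)) ∞ μ := by
  simpa only [max_comm] using hV.pos_part

theorem integrable_sq_of_memLp_top [IsFiniteMeasure μ] (hρ : MemLp ρ ∞ μ) :
    Integrable (fun x => ρ x ^ 2) μ := by
  simpa only [sq, Pi.mul_def] using (hρ.integrable le_top).mul_of_top_left hρ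

theorem tfFunctional_max_zero :
    tfFunctional μ V (fun x => max 0 (V x)) = -∫ x, max 0 (V x) ^ 2 ∂μ := by
  simp only [tfFunctional, max_zero_sq_sub_two_mul_self, integral_neg]

theorem tfFunctional_max_zero_le_and_eq_iff [IsFiniteMeasure μ] (hV : MemLp V ∞ μ)
    (hρ : Integrable ρ μ) (hρ2 : Integrable (fun x => ρ x ^ 2) μ) (hρ0 : 0 ≤ᵐ[μ] ρ) :
    tfFunctional μ V (fun x => max 0 (V x)) ≤ tfFunctional μ V ρ ∧
      (tfFunctional μ V ρ = tfFunctional μ V (fun x => max 0 (V x)) ↔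
        ρ =ᵐ[μ] fun x => max 0 (V x)) := by
  have hpos := memLp_top_max_zero hV
  have hposInt : Integrable (fun x => max 0 (V x)) μ := hpos.integrable le_top
  have hposSq := integrable_sq_of_memLp_top hpos
  have hle : (fun x => max 0 (V x) ^ 2 - 2 * V x * max 0 (V x)) ≤ᵐ[μ]
      fun x => ρ x ^ 2 - 2 * V x * ρ x := by
    filter_upwards [hρ0] with x hx
    rw [max_zero_sq_sub_two_mul_self]
    exact neg_sq_max_zero_le_sq_sub_two_mul _ hx
  have hintPos := integrable_sq_sub_two_mul hV hposInt hposSq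
  have hint := integrable_sq_sub_two_mul hV hρ hρ2
  refine ⟨integral_mono_ae hintPos hint hle, ?_⟩
  rw [tfFunctional, tfFunctional, eq_comm, integral_eq_iff_of_ae_le hintPos hint hle]
  constructor
  · intro h
    filter_upwards [h, hρ0] with x hx hx0
    exact eq_max_zero_of_sq_sub_two_mul_eq hx0 (by rw [← hx, max_zero_sq_sub_two_mul_self])
  · intro h
    filter_upwards [h] with x hx
    rw [hx]

theorem tfFunctional_max_zero_sub_le_and_eq_iff [IsFiniteMeasure μ] (hV : MemLp V ∞ μ) (t : ℝ)
    (hmass : ∫ x, max 0 (V x - t) ∂μ = 1) (hρ : Integrable ρ μ)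
    (hρ2 : Integrable (fun x => ρ x ^ 2) μ) (hρ0 : 0 ≤ᵐ[μ] ρ) (hρ1 : ∫ x, ρ x ∂μ = 1) :
    tfFunctional μ V (fun x => max 0 (V x - t)) ≤ tfFunctional μ V ρ ∧
      (tfFunctional μ V ρ = tfFunctional μ V (fun x => max 0 (V x - t)) ↔
        ρ =ᵐ[μ] fun x => max 0 (V x - t)) := by
  have hVt : MemLp (fun x => V x - t) ∞ μ := hV.sub (memLp_top_const t)
  have hpos := memLp_top_max_zero hVt
  have hposInt : Integrable (fun x => max 0 (V x - t)) μ := hpos.integrable le_top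
  have hposSq := integrable_sq_of_memLp_top hpos
  rw [tfFunctional_sub_const hV hρ hρ2 hρ1 t, tfFunctional_sub_const hV hposInt hposSq hmass t,
    sub_le_sub_iff_right, sub_left_inj]
  exact tfFunctional_max_zero_le_and_eq_iff hVt hρ hρ2 hρ0

theorem tfFunctional_max_zero_sub [IsFiniteMeasure μ] (hV : MemLp V ∞ μ) (t : ℝ)
    (hmass : ∫ x, max 0 (V x - t) ∂μ = 1) :
    tfFunctional μ V (fun x => max 0 (V x - t)) = -∫ x, max 0 (V x - t) ^ 2 ∂μ - 2 * t := by
  have hpos : MemLp (fun x => max 0 (V x - t)) ∞ μ :=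
    memLp_top_max_zero (hV.sub (memLp_top_const t))
  rw [tfFunctional_sub_const hV (hpos.integrable le_top) (integrable_sq_of_memLp_top hpos) hmass t,
    tfFunctional_max_zero]

end TFFunctional

theorem volume_real_B1 : volume.real B1 = π := by
  rw [measureReal_def, B1, EuclideanSpace.volume_ball, Fintype.card_fin,
    show ((2 : ℕ) : ℝ) / 2 + 1 = 2 by norm_num, Real.Gamma_two, sq_sqrt pi_nonneg]
  simp [ENNReal.toReal_ofReal pi_nonneg]

theorem integral_B1_comp_norm (g : ℝ → ℝ) :
    ∫ x in B1, g ‖x‖ = 2 * π * ∫ r in (0 : ℝ)..1, r * g r := by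
  have hind : ∫ x in B1, g ‖x‖ = ∫ x : Pt, (Set.Iio 1).indicator g ‖x‖ := by
    rw [B1, ← integral_indicator measurableSet_ball]
    congr 1
    ext x
    simp only [Set.indicator, Metric.mem_ball, dist_zero_right, Set.mem_Iio]
  have hpolar : ∫ r in Set.Ioi (0 : ℝ), r ^ (2 - 1) • (Set.Iio 1).indicator g r
      = ∫ r in (0 : ℝ)..1, r * g r := by
    have hweight : (fun r : ℝ => r ^ (2 - 1) • (Set.Iio 1).indicator g r)
        = (Set.Iio 1).indicator (fun r => r * g r) := by
      ext r
      rw [Set.indicator_mul_right, smul_eq_mul, pow_one]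
    rw [hweight, setIntegral_indicator measurableSet_Iio, Set.Ioi_inter_Iio,
      intervalIntegral.integral_of_le zero_le_one, integral_Ioc_eq_integral_Ioo]
  rw [hind, integral_fun_norm_addHaar volume, finrank_euclideanSpace_fin, hpolar,
    ← B1, volume_real_B1, nsmul_eq_mul, smul_eq_mul]
  push_cast
  ring

theorem integral_B1_comp_norm_sq {f : ℝ → ℝ} (hf : Continuous f) :
    ∫ x in B1, f (‖x‖ ^ 2) = π * ∫ u in (0 : ℝ)..1, f u := by
  have hsubst := intervalIntegral.integral_comp_mul_deriv (a := 0) (b := 1)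
    (fun y _ => hasDerivAt_pow 2 y) (by fun_prop) hf
  simp only [Function.comp_def, Nat.cast_ofNat, one_pow, ne_eq, OfNat.ofNat_ne_zero,
    not_false_eq_true, zero_pow] at hsubst
  rw [integral_B1_comp_norm (fun r => f (r ^ 2)), ← hsubst, ← intervalIntegral.integral_const_mul,
    ← intervalIntegral.integral_const_mul]
  congr 1
  ext r
  ring

theorem integral_max_zero_sub_pow {s : ℝ} (hs0 : 0 ≤ s) (hs1 : s ≤ 1) {n : ℕ} (hn : n ≠ 0) :
    ∫ u in (0 : ℝ)..1, max 0 (u - s) ^ n = (1 - s) ^ (n + 1) / (n + 1) := by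
  have hcont : Continuous fun v : ℝ => max 0 v ^ n := by fun_prop
  rw [intervalIntegral.integral_comp_sub_right (fun v => max 0 v ^ n), zero_sub,
    ← intervalIntegral.integral_add_adjacent_intervals (b := 0) (hcont.intervalIntegrable _ _)
      (hcont.intervalIntegrable _ _)]
  have hneg : ∫ v in -s..0, max 0 v ^ n = 0 := by
    rw [intervalIntegral.integral_congr (g := fun _ => 0), intervalIntegral.integral_zero]
    intro v hv
    rw [Set.uIcc_of_le (by linarith)] at hv
    simp [max_eq_left hv.2, hn]
  have hpos : ∫ v in (0 : ℝ)..1 - s, max 0 v ^ n = ∫ v in (0 : ℝ)..1 - s, v ^ n := by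
    refine intervalIntegral.integral_congr fun v hv => ?_
    rw [Set.uIcc_of_le (by linarith)] at hv
    simp only [max_eq_right hv.1]
  rw [hneg, hpos, integral_pow, zero_add]
  simp [hn]

theorem integral_B1_mul_max_zero_norm_sq_sub_pow (c : ℝ) {s : ℝ} (hs0 : 0 ≤ s) (hs1 : s ≤ 1)
    {n : ℕ} (hn : n ≠ 0) :
    ∫ x in B1, (c * max 0 (‖x‖ ^ 2 - s)) ^ n = c ^ n * π * (1 - s) ^ (n + 1) / (n + 1) := by
  simp only [mul_pow]
  rw [integral_const_mul, integral_B1_comp_norm_sq (f := fun u => max 0 (u - s) ^ n) (by fun_prop),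
    integral_max_zero_sub_pow hs0 hs1 hn]
  ring

instance isFiniteMeasure_restrict_B1 : IsFiniteMeasure (volume.restrict B1) :=
  isFiniteMeasure_restrict.2 measure_ball_lt_top.ne

theorem rpow_two_mul_eq_sq {ε : ℝ} (hε : 0 ≤ ε) (α : ℝ) : ε ^ (2 * α) = (ε ^ α) ^ 2 := by
  rw [mul_comm, rpow_mul hε, rpow_two]

def tfEpsPotential (Ω₁ α ε : ℝ) (x : Pt) : ℝ := Ω₁ ^ 2 / (8 * ε ^ (2 * α)) * ‖x‖ ^ 2

def tfEpsChemPot (Ω₁ α ε : ℝ) : ℝ := Ω₁ ^ 2 / (8 * ε ^ (2 * α)) * Reps Ω₁ α ε ^ 2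

theorem tfEpsEnergy_eq_mul_tfFunctional (Ω₁ α ε : ℝ) (ρ : Pt → ℝ) :
    tfEpsEnergy Ω₁ α ε ρ
      = ε ^ (2 * α) * tfFunctional (volume.restrict B1) (tfEpsPotential Ω₁ α ε) ρ := by
  unfold tfEpsEnergy tfFunctional tfEpsPotential
  congr 2
  ext x
  ring

theorem rhoTFeps_eq_max_zero (Ω₁ α : ℝ) {ε : ℝ} (hε : 0 ≤ ε) :
    rhoTFeps Ω₁ α ε = fun x => max 0 (tfEpsPotential Ω₁ α ε x - tfEpsChemPot Ω₁ α ε) := by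
  ext x
  have hc : 0 ≤ Ω₁ ^ 2 / (8 * ε ^ (2 * α)) := by have := rpow_nonneg hε (2 * α); positivity
  rw [rhoTFeps, tfEpsPotential, tfEpsChemPot, mul_max_of_nonneg _ _ hc, mul_zero, mul_sub]

theorem memLp_top_tfEpsPotential (Ω₁ α ε : ℝ) :
    MemLp (tfEpsPotential Ω₁ α ε) ∞ (volume.restrict B1) := by
  set c := Ω₁ ^ 2 / (8 * ε ^ (2 * α))
  have hcont : Continuous (tfEpsPotential Ω₁ α ε) := by unfold tfEpsPotential; fun_prop
  refine memLp_top_of_bound hcont.aestronglyMeasurable |c|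
    (ae_restrict_of_forall_mem measurableSet_ball fun x hx => ?_)
  have hx : ‖x‖ < 1 := mem_ball_zero_iff.1 hx
  rw [tfEpsPotential, norm_mul, norm_pow, norm_norm, Real.norm_eq_abs]
  exact mul_le_of_le_one_right (abs_nonneg c) (pow_le_one₀ (norm_nonneg x) hx.le)

theorem sqrt_pi_mul_pos {Ω₁ α ε : ℝ} (hε : 0 < ε) (hsmall : 4 * ε ^ α < √π * Ω₁) :
    0 < √π * Ω₁ :=
  (by positivity : 0 < 4 * ε ^ α).trans hsmall

theorem one_sub_Reps_sq (α : ℝ) {Ω₁ ε : ℝ} (hε : 0 < ε) (hsmall : 4 * ε ^ α < √π * Ω₁) :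
    1 - Reps Ω₁ α ε ^ 2 = 4 * ε ^ α / (√π * Ω₁) := by
  have hpos := sqrt_pi_mul_pos hε hsmall
  rw [Reps, sq_sqrt (sub_nonneg.2 ((div_le_one hpos).2 hsmall.le))]
  ring

theorem integral_rhoTFeps_pow {Ω₁ α ε : ℝ} (hε : 0 < ε) (hsmall : 4 * ε ^ α < √π * Ω₁)
    {n : ℕ} (hn : n ≠ 0) :
    ∫ x in B1, rhoTFeps Ω₁ α ε x ^ n
      = (Ω₁ ^ 2 / (8 * ε ^ (2 * α))) ^ n * π * (4 * ε ^ α / (√π * Ω₁)) ^ (n + 1) / (n + 1) := by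
  have hR := one_sub_Reps_sq α hε hsmall
  have hs1 : Reps Ω₁ α ε ^ 2 ≤ 1 := by
    have : 0 ≤ 4 * ε ^ α / (√π * Ω₁) := by
      have := sqrt_pi_mul_pos hε hsmall
      positivity
    linarith
  rw [← hR]
  exact integral_B1_mul_max_zero_norm_sq_sub_pow _ (sq_nonneg _) hs1 hn

theorem integral_rhoTFeps {Ω₁ α ε : ℝ} (hε : 0 < ε) (hsmall : 4 * ε ^ α < √π * Ω₁) :
    ∫ x in B1, rhoTFeps Ω₁ α ε x = 1 := by
  have h := integral_rhoTFeps_pow hε hsmall one_ne_zero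
  have hpos := sqrt_pi_mul_pos hε hsmall
  simp only [pow_one] at h
  rw [h, rpow_two_mul_eq_sq hε.le]
  have := rpow_pos_of_pos hε α
  have hΩ : Ω₁ ≠ 0 := right_ne_zero_of_mul hpos.ne'
  have hsqrtπ : √π ≠ 0 := left_ne_zero_of_mul hpos.ne'
  -- write `π` as `(√π)²` with `√π` opaque, so that `field_simp` cancels it against `√π`
  set r := √π
  rw [show π = r ^ 2 from (sq_sqrt pi_nonneg).symm]
  norm_num only
  field_simp
  ring

theorem integral_rhoTFeps_sq {Ω₁ α ε : ℝ} (hε : 0 < ε) (hsmall : 4 * ε ^ α < √π * Ω₁) :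
    ∫ x in B1, rhoTFeps Ω₁ α ε x ^ 2 = Ω₁ / (3 * √π * ε ^ α) := by
  rw [integral_rhoTFeps_pow hε hsmall two_ne_zero, rpow_two_mul_eq_sq hε.le]
  have hpos := sqrt_pi_mul_pos hε hsmall
  have := rpow_pos_of_pos hε α
  have hΩ : Ω₁ ≠ 0 := right_ne_zero_of_mul hpos.ne'
  have hsqrtπ : √π ≠ 0 := left_ne_zero_of_mul hpos.ne'
  set r := √π
  rw [show π = r ^ 2 from (sq_sqrt pi_nonneg).symm]
  norm_num only
  field_simp
  ring

theorem tfEpsEnergy_rhoTFeps {Ω₁ α ε : ℝ} (hε : 0 < ε) (hsmall : 4 * ε ^ α < √π * Ω₁) :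
    tfEpsEnergy Ω₁ α ε (rhoTFeps Ω₁ α ε)
      = -(Ω₁ ^ 2 / 4) * (1 - 8 * ε ^ α / (3 * √π * Ω₁)) := by
  have hmass := integral_rhoTFeps hε hsmall
  have hsq := integral_rhoTFeps_sq hε hsmall
  simp only [rhoTFeps_eq_max_zero Ω₁ α hε.le] at hmass hsq
  have hR : Reps Ω₁ α ε ^ 2 = 1 - 4 * ε ^ α / (√π * Ω₁) := by
    linarith [one_sub_Reps_sq α hε hsmall]
  rw [tfEpsEnergy_eq_mul_tfFunctional, rhoTFeps_eq_max_zero Ω₁ α hε.le,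
    tfFunctional_max_zero_sub (memLp_top_tfEpsPotential Ω₁ α ε) _ hmass, hsq, tfEpsChemPot,
    hR, rpow_two_mul_eq_sq hε.le]
  have hpos := sqrt_pi_mul_pos hε hsmall
  have := rpow_pos_of_pos hε α
  have hΩ : Ω₁ ≠ 0 := right_ne_zero_of_mul hpos.ne'
  have hsqrtπ : √π ≠ 0 := left_ne_zero_of_mul hpos.ne'
  field_simp
  ring

theorem stmt15_general (Ω₁ α ε : ℝ) (hε : 0 < ε)
    (hsmall : 4 * ε ^ α < Real.sqrt π * Ω₁) :
    (∀ x : Pt, 0 ≤ rhoTFeps Ω₁ α ε x) ∧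
    (∫ x in B1, rhoTFeps Ω₁ α ε x) = 1 ∧
    (∀ ρ : Pt → ℝ, tfAdm ρ →
      tfEpsEnergy Ω₁ α ε (rhoTFeps Ω₁ α ε) ≤ tfEpsEnergy Ω₁ α ε ρ ∧
      (tfEpsEnergy Ω₁ α ε ρ = tfEpsEnergy Ω₁ α ε (rhoTFeps Ω₁ α ε) ↔
        ρ =ᵐ[volume.restrict B1] rhoTFeps Ω₁ α ε)) ∧
    tfEpsEnergy Ω₁ α ε (rhoTFeps Ω₁ α ε) =
      -(Ω₁ ^ 2 / 4) * (1 - 8 * ε ^ α / (3 * Real.sqrt π * Ω₁)) := by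
  have hρ := rhoTFeps_eq_max_zero Ω₁ α hε.le
  have hmass := integral_rhoTFeps hε hsmall
  refine ⟨fun x => hρ ▸ le_max_left _ _, hmass, fun ρ ⟨hρi, hρ2, hρ0, hρ1⟩ => ?_,
    tfEpsEnergy_rhoTFeps hε hsmall⟩
  have hE : 0 < ε ^ (2 * α) := rpow_pos_of_pos hε _
  rw [tfEpsEnergy_eq_mul_tfFunctional, tfEpsEnergy_eq_mul_tfFunctional,
    mul_le_mul_iff_right₀ hE, (mul_right_injective₀ hE.ne').eq_iff, hρ]
  rw [hρ] at hmass
  exact tfFunctional_max_zero_sub_le_and_eq_iff (memLp_top_tfEpsPotential Ω₁ α ε) _ hmass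
    hρi hρ2 hρ0 hρ1

theorem stmt15 (Ω₁ α ε : ℝ) (hΩ : 0 < Ω₁) (hα : 0 < α) (hε : 0 < ε)
    (hsmall : 4 * ε ^ α < Real.sqrt π * Ω₁) :
    (∀ x : Pt, 0 ≤ rhoTFeps Ω₁ α ε x) ∧
    (∫ x in B1, rhoTFeps Ω₁ α ε x) = 1 ∧
    (∀ ρ : Pt → ℝ, tfAdm ρ →
      tfEpsEnergy Ω₁ α ε (rhoTFeps Ω₁ α ε) ≤ tfEpsEnergy Ω₁ α ε ρ ∧
      (tfEpsEnergy Ω₁ α ε ρ = tfEpsEnergy Ω₁ α ε (rhoTFeps Ω₁ α ε) ↔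
        ρ =ᵐ[volume.restrict B1] rhoTFeps Ω₁ α ε)) ∧
    tfEpsEnergy Ω₁ α ε (rhoTFeps Ω₁ α ε) =
      -(Ω₁ ^ 2 / 4) * (1 - 8 * ε ^ α / (3 * Real.sqrt π * Ω₁)) :=
  stmt15_general Ω₁ α ε hε hsmall
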